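/- arXiv:2405.19640 — 8 statements merged into one kernel-verified Lean document; each statement's English description precedes it below -/
import Mathlib

section
/- If G is an inner ultrahomogeneous group, then its centre is either trivial or cyclic of order 2; moreover, in the latter case the nontrivial central element is the unique element of G of order 2. -/
/-!
Elements of the same order generate isomorphic cyclic subgroups, so in an inner ultrahomogeneous
group they are conjugate; a central element, being fixed by conjugation, is therefore the only
element of its order. Applied to `z` and `z⁻¹`, this makes every nontrivial central element an
involution, and then the only involution of the group.
-/

def InnerUltrahomogeneous (G : Type*) [Group G] : Prop :=
  ∀ (A B : Subgroup G), A.FG → B.FG → ∀ e : A ≃* B,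
    ∃ g : G, ∀ a : A, g⁻¹ * (a : G) * g = ((e a : B) : G)

open Subgroup

section zpowers

variable {G : Type*} [Group G]

theorem Subgroup.mem_zpowers_generator (x : G) (a : zpowers x) :
    a ∈ zpowers (⟨x, mem_zpowers x⟩ : zpowers x) := by
  obtain ⟨n, hn⟩ := mem_zpowers_iff.mp a.2
  exact mem_zpowers_iff.mpr ⟨n, Subtype.ext hn⟩

theorem Subgroup.fg_zpowers (x : G) : (zpowers x).FG :=
  ⟨{x}, by rw [Finset.coe_singleton, zpowers_eq_closure]⟩

end zpowers

namespace InnerUltrahomogeneous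

variable {G : Type*} [Group G]

theorem exists_conj_eq_of_orderOf_eq (h : InnerUltrahomogeneous G) {x y : G}
    (hxy : orderOf x = orderOf y) : ∃ g : G, g⁻¹ * x * g = y := by
  let e : zpowers x ≃* zpowers y :=
    mulEquivOfOrderOfEq (mem_zpowers_generator x) (mem_zpowers_generator y)
      (by simpa only [Subgroup.orderOf_mk] using hxy)
  obtain ⟨g, hg⟩ := h _ _ (fg_zpowers x) (fg_zpowers y) e
  exact ⟨g, by simpa [e] using hg ⟨x, mem_zpowers x⟩⟩

theorem eq_of_mem_center_of_orderOf_eq (h : InnerUltrahomogeneous G) {z w : G}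
    (hz : z ∈ center G) (hzw : orderOf z = orderOf w) : w = z := by
  obtain ⟨g, rfl⟩ := h.exists_conj_eq_of_orderOf_eq hzw
  rw [mem_center_iff.mp hz g⁻¹, inv_mul_cancel_right]

theorem orderOf_eq_two_of_mem_center (h : InnerUltrahomogeneous G) {z : G}
    (hz : z ∈ center G) (hz1 : z ≠ 1) : orderOf z = 2 := by
  have hinv : z⁻¹ = z := h.eq_of_mem_center_of_orderOf_eq hz (orderOf_inv z).symm
  exact orderOf_eq_prime (by rw [sq, mul_eq_one_iff_eq_inv, hinv]) hz1

end InnerUltrahomogeneous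

theorem center_of_innerUltrahomogeneous
    {G : Type*} [Group G] (h : InnerUltrahomogeneous G) :
    Subgroup.center G = ⊥ ∨
      ∃ z : G, z ∈ Subgroup.center G ∧ orderOf z = 2 ∧
        Subgroup.center G = Subgroup.zpowers z ∧
        ∀ w : G, orderOf w = 2 → w = z := by
  rcases (center G).bot_or_exists_ne_one with hbot | ⟨z, hz, hz1⟩
  · exact Or.inl hbot
  have hz2 : orderOf z = 2 := h.orderOf_eq_two_of_mem_center hz hz1
  have hunique : ∀ w : G, orderOf w = 2 → w = z := fun w hw =>
    h.eq_of_mem_center_of_orderOf_eq hz (hz2.trans hw.symm)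
  refine Or.inr ⟨z, hz, hz2, le_antisymm (fun c hc => ?_) (zpowers_le.mpr hz), hunique⟩
  rcases eq_or_ne c 1 with rfl | hc1
  · exact one_mem _
  · rw [hunique c (h.orderOf_eq_two_of_mem_center hc hc1)]
    exact mem_zpowers z
end

section
/- Let Γ be an inner ultrahomogeneous group, let A ≤ Γ and B ≤ Γ with B contained in the normalizer of A, and suppose D = B·A is finitely generated. If σ is an injective endomorphism of A that commutes with conjugation by every element of B and fixes every element of A ∩ B, then the map sending b·a to b·σ(a) (for b ∈ B, a ∈ A) is a well-defined injective group homomorphism from D to D. -/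
/-!
`D = A ⊔ B` is the image of the semidirect product `A ⋊ B` (with `B` acting on `A` by
conjugation) under `(a, b) ↦ a * b`, whose kernel consists of the pairs `(c, c⁻¹)` with
`c ∈ A ∩ B`. Since `σ` commutes with the action of `B`, `(a, b) ↦ (σ a, b)` is an endomorphism of
`A ⋊ B`. It maps the kernel into itself because `σ` fixes `A ∩ B`, and only the kernel into the
kernel because `σ` is moreover injective; hence it descends to an injective endomorphism of `D`.
-/

open Function Subgroup

theorem MonoidHom.exists_injective_comp_eq_comp {P G : Type*} [Group P] [Group G]
    (π : P →* G) (hπ : Surjective π) (ψ : P →* P) (hker : (π.comp ψ).ker = π.ker) :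
    ∃ φ : G →* G, Injective φ ∧ ∀ p, φ (π p) = π (ψ p) := by
  let φ := π.liftOfSurjective hπ ⟨π.comp ψ, hker.ge⟩
  have hφ : ∀ p, φ (π p) = π (ψ p) := π.liftOfRightInverse_comp_apply _ _ _
  refine ⟨φ, (injective_iff_map_eq_one φ).mpr fun g hg ↦ ?_, hφ⟩
  obtain ⟨p, rfl⟩ := hπ g
  rw [hφ] at hg
  exact (hker ▸ MonoidHom.mem_ker.mpr hg : p ∈ π.ker)

namespace SemidirectProduct

variable {N G : Type*} [Group N] [Group G] {φ : G →* MulAut N}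

def mapLeft (σ : N →* N) (hσ : ∀ g n, σ (φ g n) = φ g (σ n)) : N ⋊[φ] G →* N ⋊[φ] G :=
  map σ (MonoidHom.id G) fun g ↦ MonoidHom.ext (hσ g)

end SemidirectProduct

open SemidirectProduct

namespace Subgroup

variable {Γ : Type*} [Group Γ] {A B : Subgroup Γ} (hBN : B ≤ normalizer (A : Set Γ))

/-- `b` acts on `A` by `a ↦ b * a * b⁻¹`. -/
abbrev normalizerAction : B →* MulAut A :=
  A.normalizerMonoidHom.comp (inclusion hBN)

theorem range_monoidHomSubgroup : (monoidHomSubgroup hBN).range = A ⊔ B := by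
  ext x
  rw [MonoidHom.mem_range, ← SetLike.mem_coe, coe_mul_of_right_le_normalizer_left A B hBN,
    Set.mem_mul]
  constructor
  · rintro ⟨p, rfl⟩
    exact ⟨p.left, p.left.2, p.right, p.right.2, rfl⟩
  · rintro ⟨a, ha, b, hb, rfl⟩
    exact ⟨⟨⟨a, ha⟩, ⟨b, hb⟩⟩, rfl⟩

variable {hBN}

theorem monoidHomSubgroup_mapLeft_eq_one_iff {σ : A →* A}
    (hσ : ∀ (b : B) (a : A), σ (normalizerAction hBN b a) = normalizerAction hBN b (σ a))
    (hinj : Injective σ) (hfix : ∀ a : A, (a : Γ) ∈ B → σ a = a)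
    (p : A ⋊[normalizerAction hBN] B) :
    monoidHomSubgroup hBN (mapLeft σ hσ p) = 1 ↔ monoidHomSubgroup hBN p = 1 := by
  obtain ⟨a, b⟩ := p
  have mem_B : ∀ a' : A, (a' : Γ) * b = 1 → (a' : Γ) ∈ B := fun a' h ↦
    eq_inv_of_mul_eq_one_left h ▸ inv_mem b.2
  simp only [monoidHomSubgroup_apply, mapLeft, map_left, map_right, MonoidHom.id_apply]
  constructor
  · intro h
    rwa [← hinj (hfix _ (mem_B _ h))]
  · intro h
    rwa [hfix a (mem_B a h)]

end Subgroup

theorem extend_embedding_of_commuting_conjugation_general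
    {Γ : Type*} [Group Γ] (A B : Subgroup Γ) (hBN : B ≤ Subgroup.normalizer (A : Set Γ))
    (σ : A →* A) (hinj : Function.Injective σ)
    (hcomm : ∀ (a : A) (b : B) (hm : (b : Γ)⁻¹ * (a : Γ) * (b : Γ) ∈ A),
      ((σ ⟨(b : Γ)⁻¹ * (a : Γ) * (b : Γ), hm⟩ : A) : Γ)
        = (b : Γ)⁻¹ * ((σ a : A) : Γ) * (b : Γ))
    (hfix : ∀ a : A, (a : Γ) ∈ B → σ a = a) :
    ∃ φ : (A ⊔ B : Subgroup Γ) →* (A ⊔ B : Subgroup Γ),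
      Function.Injective φ ∧
      ∀ (b : B) (a : A),
        ((φ ⟨(b : Γ) * (a : Γ),
            mul_mem ((le_sup_right : B ≤ A ⊔ B) b.2)
              ((le_sup_left : A ≤ A ⊔ B) a.2)⟩ : (A ⊔ B : Subgroup Γ)) : Γ)
          = (b : Γ) * ((σ a : A) : Γ) := by
  have hσ : ∀ (b : B) (a : A), σ (normalizerAction hBN b a) = normalizerAction hBN b (σ a) := by
    intro b a
    have h := hcomm a b⁻¹ (by simpa using (normalizerAction hBN b a).2)
    simp only [InvMemClass.coe_inv, inv_inv] at h
    exact Subtype.ext h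
  let π := (monoidHomSubgroup hBN).codRestrict (A ⊔ B) fun p ↦
    range_monoidHomSubgroup hBN ▸ ⟨p, rfl⟩
  have hπ : Surjective π := by
    rintro ⟨x, hx⟩
    obtain ⟨p, hp⟩ := (range_monoidHomSubgroup hBN).ge hx
    exact ⟨p, Subtype.ext hp⟩
  have hker : (π.comp (mapLeft σ hσ)).ker = π.ker := by
    ext p
    simp only [MonoidHom.mem_ker, MonoidHom.comp_apply, ← Subtype.val_inj]
    exact monoidHomSubgroup_mapLeft_eq_one_iff hσ hinj hfix p
  obtain ⟨φ, hφinj, hφ⟩ := π.exists_injective_comp_eq_comp hπ (mapLeft σ hσ) hker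
  refine ⟨φ, hφinj, fun b a ↦ ?_⟩
  -- `b * a = (b a b⁻¹) * b` is the image of `(b a b⁻¹, b) ∈ A ⋊ B`.
  convert congrArg Subtype.val (hφ ⟨normalizerAction hBN b a, b⟩) using 3
  · exact Subtype.ext (show (b : Γ) * a = b * a * (b : Γ)⁻¹ * b by group)
  · show (b : Γ) * (σ a : Γ) = ((σ (normalizerAction hBN b a) : A) : Γ) * b
    rw [hσ]
    show (b : Γ) * (σ a : Γ) = b * (σ a : Γ) * (b : Γ)⁻¹ * b
    group

theorem extend_embedding_of_commuting_conjugation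
    {Γ : Type*} [Group Γ] (A B : Subgroup Γ) (hBN : B ≤ Subgroup.normalizer (A : Set Γ))
    (hfg : (A ⊔ B).FG)
    (σ : A →* A) (hinj : Function.Injective σ)
    (hcomm : ∀ (a : A) (b : B) (hm : (b : Γ)⁻¹ * (a : Γ) * (b : Γ) ∈ A),
      ((σ ⟨(b : Γ)⁻¹ * (a : Γ) * (b : Γ), hm⟩ : A) : Γ)
        = (b : Γ)⁻¹ * ((σ a : A) : Γ) * (b : Γ))
    (hfix : ∀ a : A, (a : Γ) ∈ B → σ a = a) :
    ∃ φ : (A ⊔ B : Subgroup Γ) →* (A ⊔ B : Subgroup Γ),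
      Function.Injective φ ∧
      ∀ (b : B) (a : A),
        ((φ ⟨(b : Γ) * (a : Γ),
            mul_mem ((le_sup_right : B ≤ A ⊔ B) b.2)
              ((le_sup_left : A ≤ A ⊔ B) a.2)⟩ : (A ⊔ B : Subgroup Γ)) : Γ)
          = (b : Γ) * ((σ a : A) : Γ) :=
  extend_embedding_of_commuting_conjugation_general A B hBN σ hinj hcomm hfix
end

section
/- Let G be a finite abelian group of odd order and let g ∈ G be an element that does not generate G. Then there exists a nontrivial automorphism of G fixing g. -/
/-!
Since `⟨g⟩` is proper, some surjection `ψ : G → ℤ/p` kills `g`, and `p` is odd because it divides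
`|G|`. For `z` of order `p`, the transvection `x ↦ x * z ^ ψ(x)` fixes `g` and moves every `x`
with `ψ(x) = 1`. It is injective, hence an automorphism, as soon as `1 + ψ(z) ≠ 0`; if `z` fails
this then `z²` does not, as `p` is odd.
-/

open Function Subgroup

section

variable {G : Type*} [CommGroup G]

theorem CommGroup.exists_surjective_zmod_of_nontrivial [Finite G] [Nontrivial G] :
    ∃ p : ℕ, p.Prime ∧ ∃ ψ : G →* Multiplicative (ZMod p), Surjective ψ := by
  obtain ⟨ι, -, n, hn, ⟨e⟩⟩ := CommGroup.equiv_prod_multiplicative_zmod_of_finite G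
  obtain ⟨i⟩ : Nonempty ι := by
    by_contra! h
    exact not_subsingleton G e.toEquiv.subsingleton
  obtain ⟨p, hp, hpn⟩ := Nat.exists_prime_and_dvd (hn i).ne'
  have : Fact p.Prime := ⟨hp⟩
  refine ⟨p, hp, ((ZMod.castHom hpn (ZMod p)).toAddMonoidHom.toMultiplicative.comp
    (Pi.evalMonoidHom _ i)).comp e.toMonoidHom, ?_⟩
  exact (ZMod.ringHom_surjective (ZMod.castHom hpn (ZMod p))).comp
    ((surjective_eval i).comp e.surjective)

theorem Subgroup.exists_surjective_zmod_le_ker [Finite G] {H : Subgroup G} (hH : H ≠ ⊤) :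
    ∃ p : ℕ, p.Prime ∧ ∃ ψ : G →* Multiplicative (ZMod p), Surjective ψ ∧ H ≤ ψ.ker := by
  have : Nontrivial (G ⧸ H) := QuotientGroup.nontrivial_iff.mpr hH
  obtain ⟨p, hp, ψ, hψ⟩ := CommGroup.exists_surjective_zmod_of_nontrivial (G := G ⧸ H)
  refine ⟨p, hp, ψ.comp (QuotientGroup.mk' H), hψ.comp (QuotientGroup.mk'_surjective H), ?_⟩
  intro x hx
  simp [(QuotientGroup.eq_one_iff x).mpr hx]

theorem MonoidHom.injective_id_mul_comp {A : Type*} [CommGroup A] (φ : A →* G) (ψ : G →* A)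
    (h : Injective (MonoidHom.id A * ψ.comp φ)) : Injective (MonoidHom.id G * φ.comp ψ) := by
  rw [injective_iff_map_eq_one] at h ⊢
  intro x hx
  have hψx : ψ x = 1 := h _ (by simpa using congrArg ψ hx)
  simpa [hψx] using hx

section ZModPow

variable {n : ℕ} [NeZero n]

def zmodPowHom (z : G) (hz : z ^ n = 1) : Multiplicative (ZMod n) →* G where
  toFun k := z ^ k.toAdd.val
  map_one' := by simp
  map_mul' a b := by
    rw [toAdd_mul, ZMod.val_add, ← pow_eq_pow_mod _ hz, pow_add]

@[simp]
theorem zmodPowHom_apply (z : G) (hz : z ^ n = 1) (k : Multiplicative (ZMod n)) :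
    zmodPowHom z hz k = z ^ k.toAdd.val := rfl

theorem toAdd_map_zmodPowHom (ψ : G →* Multiplicative (ZMod n))
    (z : G) (hz : z ^ n = 1) (k : Multiplicative (ZMod n)) :
    (ψ (zmodPowHom z hz k)).toAdd = k.toAdd * (ψ z).toAdd := by
  rw [zmodPowHom_apply, map_pow, toAdd_pow, nsmul_eq_mul, ZMod.natCast_zmod_val]

end ZModPow

section Transvection

variable [Finite G] {p : ℕ} [Fact p.Prime]

theorem exists_mulEquiv_apply_eq_mul_pow (ψ : G →* Multiplicative (ZMod p)) {z : G}
    (hz : z ^ p = 1) (hψz : (ψ z).toAdd ≠ -1) :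
    ∃ σ : G ≃* G, ∀ x, σ x = x * z ^ (ψ x).toAdd.val := by
  have hunit : 1 + (ψ z).toAdd ≠ 0 := fun h => hψz (eq_neg_of_add_eq_zero_right h)
  have hinj : Injective (MonoidHom.id G * (zmodPowHom z hz).comp ψ) := by
    refine MonoidHom.injective_id_mul_comp _ _ ((injective_iff_map_eq_one _).mpr fun k hk => ?_)
    have : k.toAdd * (1 + (ψ z).toAdd) = 0 := by
      simpa [toAdd_map_zmodPowHom, mul_add] using congrArg Multiplicative.toAdd hk
    exact toAdd_eq_zero.mp ((mul_eq_zero.mp this).resolve_right hunit)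
  exact ⟨MulEquiv.ofBijective _ (Finite.injective_iff_bijective.mp hinj), fun x => rfl⟩

theorem exists_orderOf_eq_prime_toAdd_ne_neg_one (hp2 : p ≠ 2) (hpG : p ∣ Nat.card G)
    (ψ : G →* Multiplicative (ZMod p)) : ∃ z : G, orderOf z = p ∧ (ψ z).toAdd ≠ -1 := by
  obtain ⟨z, hz⟩ := exists_prime_orderOf_dvd_card' p hpG
  by_cases hψz : (ψ z).toAdd = -1
  · have hcop : (orderOf z).Coprime 2 := hz ▸ (Nat.coprime_primes Fact.out Nat.prime_two).mpr hp2
    refine ⟨z ^ 2, hz ▸ hcop.orderOf_pow, ?_⟩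
    rw [map_pow, toAdd_pow, hψz]
    intro h
    have : (1 : ZMod p) = 0 := by linear_combination (-1 : ZMod p) * h
    exact one_ne_zero this
  · exact ⟨z, hz, hψz⟩

end Transvection

end

theorem odd_abelian_nontrivial_automorphism_fixing
    {G : Type*} [CommGroup G] [Finite G] (hodd : Odd (Nat.card G))
    (g : G) (hg : Subgroup.zpowers g ≠ ⊤) :
    ∃ σ : G ≃* G, σ ≠ MulEquiv.refl G ∧ σ g = g := by
  obtain ⟨p, hp, ψ, hψ, hgψ⟩ := exists_surjective_zmod_le_ker hg
  have : Fact p.Prime := ⟨hp⟩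
  have hpG : p ∣ Nat.card G := by
    simpa [Nat.card_zmod] using Subgroup.card_dvd_of_surjective ψ hψ
  have hp2 : p ≠ 2 := by
    rintro rfl
    exact Nat.not_even_iff_odd.mpr hodd (even_iff_two_dvd.mpr hpG)
  obtain ⟨z, hz, hψz⟩ := exists_orderOf_eq_prime_toAdd_ne_neg_one hp2 hpG ψ
  obtain ⟨σ, hσ⟩ := exists_mulEquiv_apply_eq_mul_pow ψ (hz ▸ pow_orderOf_eq_one z) hψz
  refine ⟨σ, fun h => ?_, by simp [hσ, ψ.mem_ker.mp (hgψ (mem_zpowers g))]⟩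
  obtain ⟨x, hx⟩ := hψ (Multiplicative.ofAdd 1)
  have : x * z = x := by simpa [hx, ZMod.val_one] using (hσ x).symm.trans (congrArg (· x) h)
  exact hp.one_lt.ne' (hz ▸ orderOf_eq_one_iff.mpr (mul_eq_left.mp this))
end

section
/- If Γ is an inner ultrahomogeneous group that is not torsion (has an element of infinite order), then Γ contains a free group of rank 2 as a subgroup, provided Γ contains a subgroup isomorphic to ℤ², using that GL₂(ℤ) contains a free subgroup of rank 2 and that any automorphism of a finitely generated subgroup is realized by conjugation. More precisely: if G ≤ Γ with G ≅ ℤ² and σ₁, σ₂ ∈ Aut(G) freely generate a free subgroup of Aut(G), and g₁, g₂ ∈ Γ act on G by conjugation as σ₁, σ₂ respectively, then g₁ and g₂ generate a free subgroup of Γ of rank 2. -/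
/-!
Elements of Γ normalising G act on G by conjugation, and this action is a homomorphism from the
normaliser of G to Aut(G). Since gᵢ⁻¹ acts as σᵢ, the word map of g₁⁻¹, g₂⁻¹ followed by this
homomorphism is the word map of σ₁, σ₂, which is injective; hence so is the word map of
g₁⁻¹, g₂⁻¹, and therefore that of g₁, g₂, as inverting the generators is an automorphism of the
free group.
-/

open Function

namespace Subgroup

variable {G : Type*} [Group G] {H : Subgroup G}

theorem mem_normalizer_of_conj_eq (σ : MulAut H) {g : G}
    (hg : ∀ h : H, g * h * g⁻¹ = σ h) : g ∈ normalizer (H : Set G) := by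
  refine mem_normalizer_iff.mpr fun h => ⟨fun hh => hg ⟨h, hh⟩ ▸ (σ _).2, fun hh => ?_⟩
  have hconj : g * h * g⁻¹ = g * (σ⁻¹ ⟨_, hh⟩ : H) * g⁻¹ := by
    rw [hg, MulAut.apply_inv_self]
  rw [mul_left_inj, mul_right_inj] at hconj
  exact hconj ▸ (σ⁻¹ _).2

theorem normalizerMonoidHom_eq_of_conj_eq (σ : MulAut H) {g : G}
    (hg : ∀ h : H, g * h * g⁻¹ = σ h) :
    H.normalizerMonoidHom ⟨g, mem_normalizer_of_conj_eq σ hg⟩ = σ := by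
  ext h
  simp [hg]

end Subgroup

namespace FreeGroup

variable {α G : Type*} [Group G]

theorem comp_lift {K : Type*} [Group K] (f : G →* K) (x : α → G) :
    f.comp (lift x) = lift (f ∘ x) :=
  ext_hom _ _ fun a => by simp

theorem lift_injective_of_lift_inv_injective {x : α → G}
    (h : Injective (lift fun a => (x a)⁻¹)) : Injective (lift x) := by
  set ι : FreeGroup α →* FreeGroup α := lift fun a => (of a)⁻¹
  have hι : ι.comp ι = MonoidHom.id _ := ext_hom _ _ fun a => by simp [ι]
  have hx : (lift fun a => (x a)⁻¹).comp ι = lift x := ext_hom _ _ fun a => by simp [ι]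
  rw [← hx]
  exact h.comp (LeftInverse.injective (g := ι) (DFunLike.congr_fun hι))

theorem lift_injective_of_conj_eq {H : Subgroup G} {x : α → G} (σ : α → MulAut H)
    (hx : ∀ a (h : H), x a * h * (x a)⁻¹ = σ a h) (hσ : Injective (lift σ)) :
    Injective (lift x) := by
  let N := Subgroup.normalizer (H : Set G)
  let y : α → N := fun a => ⟨x a, Subgroup.mem_normalizer_of_conj_eq _ (hx a)⟩
  have hy : H.normalizerMonoidHom ∘ y = σ :=
    funext fun a => Subgroup.normalizerMonoidHom_eq_of_conj_eq (σ a) (hx a)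
  have hy_inj : Injective (lift y) := by
    rw [← hy, ← comp_lift, MonoidHom.coe_comp] at hσ
    exact hσ.of_comp
  have hx_eq : lift x = N.subtype.comp (lift y) := by
    rw [comp_lift]
    rfl
  rw [hx_eq, MonoidHom.coe_comp]
  exact N.subtype_injective.comp hy_inj

end FreeGroup

theorem free_subgroup_from_free_automorphisms_general
    {Γ : Type*} [Group Γ] (G : Subgroup Γ)
    (σ₁ σ₂ : MulAut G)
    (hfree : Function.Injective
      ((FreeGroup.lift fun i : Fin 2 => if i = 0 then σ₁ else σ₂ :
        FreeGroup (Fin 2) →* MulAut G)))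
    (g₁ g₂ : Γ)
    (h₁ : ∀ a : G, g₁⁻¹ * (a : Γ) * g₁ = ((σ₁ a : G) : Γ))
    (h₂ : ∀ a : G, g₂⁻¹ * (a : Γ) * g₂ = ((σ₂ a : G) : Γ)) :
    Function.Injective
      ((FreeGroup.lift fun i : Fin 2 => if i = 0 then g₁ else g₂ :
        FreeGroup (Fin 2) →* Γ)) := by
  apply FreeGroup.lift_injective_of_lift_inv_injective
  refine FreeGroup.lift_injective_of_conj_eq _ (fun i a => ?_) hfree
  fin_cases i <;> simp [h₁, h₂]

theorem free_subgroup_from_free_automorphisms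
    {Γ : Type*} [Group Γ] (G : Subgroup Γ)
    (hG : Nonempty (G ≃* Multiplicative (ℤ × ℤ)))
    (σ₁ σ₂ : MulAut G)
    (hfree : Function.Injective
      ((FreeGroup.lift fun i : Fin 2 => if i = 0 then σ₁ else σ₂ :
        FreeGroup (Fin 2) →* MulAut G)))
    (g₁ g₂ : Γ)
    (h₁ : ∀ a : G, g₁⁻¹ * (a : Γ) * g₁ = ((σ₁ a : G) : Γ))
    (h₂ : ∀ a : G, g₂⁻¹ * (a : Γ) * g₂ = ((σ₂ a : G) : Γ)) :
    Function.Injective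
      ((FreeGroup.lift fun i : Fin 2 => if i = 0 then g₁ else g₂ :
        FreeGroup (Fin 2) →* Γ)) :=
  free_subgroup_from_free_automorphisms_general G σ₁ σ₂ hfree g₁ g₂ h₁ h₂
end

section
/- Suppose Γ is an inner ultrahomogeneous group such that for every a ∈ Γ there exists g ∈ Γ of infinite order with ⟨a, g⟩ isomorphic (naturally) to the free product ⟨a⟩ * ⟨g⟩. Then every nonidentity element of Γ is a product of at most 4 conjugates of any other nonidentity element; in particular Γ is uniformly simple. -/
open Subgroup Function
open scoped commutatorElement

namespace Subgroup

variable {G : Type*} [Group G]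

theorem zpowers_fg (x : G) : (zpowers x).FG :=
  (fg_iff _).mpr ⟨{x}, (zpowers_eq_closure x).symm, Set.finite_singleton x⟩

theorem mem_zpowers_mk_self (x : G) (z : zpowers x) :
    z ∈ zpowers (⟨x, mem_zpowers x⟩ : zpowers x) := by
  obtain ⟨z, k, rfl⟩ := z
  exact ⟨k, Subtype.ext (by simp)⟩

end Subgroup

theorem InnerUltrahomogeneous.exists_conj_of_orderOf_eq {G : Type*} [Group G]
    (h : InnerUltrahomogeneous G) {x y : G} (hxy : orderOf x = orderOf y) :
    ∃ c : G, c⁻¹ * x * c = y := by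
  let e := mulEquivOfOrderOfEq (mem_zpowers_mk_self x) (mem_zpowers_mk_self y)
    (by simpa using hxy)
  obtain ⟨c, hc⟩ := h _ _ (zpowers_fg x) (zpowers_fg y) e
  exact ⟨c, by simpa [e] using hc ⟨x, mem_zpowers x⟩⟩

theorem Equiv.orderOf_addRight_eq_zero {M : Type*} [AddGroup M] [IsAddTorsionFree M] {t : M}
    (ht : t ≠ 0) : orderOf (Equiv.addRight t) = 0 := by
  refine orderOf_eq_zero_iff'.mpr fun n hn hpow => ht ?_
  have : n • t = 0 := by simpa using congr($hpow (0 : M))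
  exact (nsmul_eq_zero_iff_right hn.ne').mp this

theorem commutatorElement_toPerm_addRight {R : Type*} [Ring R] (u : Rˣ) (t : R) :
    ⁅(MulAction.toPerm u : Equiv.Perm R), Equiv.addRight t⁆ =
      Equiv.addRight (((u : R) - 1) * t) := by
  ext z
  simp [commutatorElement_def, Units.smul_def, sub_eq_neg_add, add_mul, add_assoc]

theorem Complex.exists_unit_ne_one_pow_eq_one {n : ℕ} (hn : n ≠ 1) :
    ∃ u : ℂˣ, u ≠ 1 ∧ u ^ n = 1 := by
  rcases eq_or_ne n 0 with rfl | hn0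
  · exact ⟨Units.mk0 2 two_ne_zero, by simp [Units.ext_iff], pow_zero _⟩
  · have hζ := Complex.isPrimitiveRoot_exp n hn0
    refine ⟨(hζ.isUnit hn0).unit, ?_, ?_⟩
    · simpa [Units.ext_iff] using hζ.ne_one (by omega)
    · simpa [Units.ext_iff] using hζ.pow_eq_one

namespace Monoid.Coprod

variable {A B : Type*} [Group A] [Group B] {x : A} {y : B}

theorem orderOf_inl_mul_inr_eq_zero (hy : ∀ z, z ∈ zpowers y) (hy0 : orderOf y = 0) :
    orderOf (inl x * inr y : Monoid.Coprod A B) = 0 := by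
  let τ : B →* Equiv.Perm ℂ := monoidHomOfForallMemZpowers hy (g' := .addRight 1) (by simp [hy0])
  have himage : lift 1 τ (inl x * inr y) = Equiv.addRight 1 := by simp [τ]
  refine Nat.eq_zero_of_zero_dvd ?_
  rw [← Equiv.orderOf_addRight_eq_zero (one_ne_zero' ℂ), ← himage]
  exact orderOf_map_dvd _ _

theorem orderOf_commutatorElement_inl_inr_eq_zero (hx : ∀ z, z ∈ zpowers x) (hx1 : x ≠ 1)
    (hy : ∀ z, z ∈ zpowers y) (hy0 : orderOf y = 0) :
    orderOf ⁅(inl x : Monoid.Coprod A B), (inr y : Monoid.Coprod A B)⁆ = 0 := by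
  obtain ⟨u, hu1, hun⟩ := Complex.exists_unit_ne_one_pow_eq_one (n := orderOf x)
    (by rwa [Ne, orderOf_eq_one_iff])
  let χ : A →* ℂˣ := monoidHomOfForallMemZpowers hx (orderOf_dvd_of_pow_eq_one hun)
  let τ : B →* Equiv.Perm ℂ := monoidHomOfForallMemZpowers hy (g' := .addRight 1) (by simp [hy0])
  have himage : lift ((MulAction.toPermHom ℂˣ ℂ).comp χ) τ
      ⁅(inl x : Monoid.Coprod A B), (inr y : Monoid.Coprod A B)⁆ =
        Equiv.addRight ((u : ℂ) - 1) := by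
    simpa [map_commutatorElement, χ, τ] using commutatorElement_toPerm_addRight u (1 : ℂ)
  refine Nat.eq_zero_of_zero_dvd ?_
  rw [← Equiv.orderOf_addRight_eq_zero (sub_ne_zero.mpr (Units.val_eq_one.not.mpr hu1)), ← himage]
  exact orderOf_map_dvd _ _

end Monoid.Coprod

section CoprodLiftInjective

variable {G : Type*} [Group G] {a g : G}

theorem orderOf_mul_eq_zero_of_injective_coprodLift (hg : orderOf g = 0)
    (hinj : Injective (Monoid.Coprod.lift (zpowers a).subtype (zpowers g).subtype)) :
    orderOf (a * g) = 0 := by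
  simpa using (orderOf_injective _ hinj _).trans <|
    Monoid.Coprod.orderOf_inl_mul_inr_eq_zero (x := ⟨a, mem_zpowers a⟩)
      (mem_zpowers_mk_self g) (by simpa using hg)

theorem orderOf_commutatorElement_eq_zero_of_injective_coprodLift (ha : a ≠ 1)
    (hg : orderOf g = 0)
    (hinj : Injective (Monoid.Coprod.lift (zpowers a).subtype (zpowers g).subtype)) :
    orderOf ⁅a, g⁆ = 0 := by
  simpa using (orderOf_injective _ hinj _).trans <|
    Monoid.Coprod.orderOf_commutatorElement_inl_inr_eq_zero (mem_zpowers_mk_self a)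
      (by simpa using ha) (mem_zpowers_mk_self g) (by simpa using hg)

end CoprodLiftInjective

theorem uniformly_simple_of_free_products
    {Γ : Type*} [Group Γ] (h : InnerUltrahomogeneous Γ)
    (hfp : ∀ a : Γ, ∃ g : Γ, orderOf g = 0 ∧
      Function.Injective
        (Monoid.Coprod.lift (Subgroup.zpowers a).subtype (Subgroup.zpowers g).subtype)) :
    ∀ a b : Γ, a ≠ 1 → b ≠ 1 →
      ∃ l : List Γ, l.length ≤ 4 ∧
        (∀ x ∈ l, ∃ c : Γ, x = c⁻¹ * a * c ∨ x = c⁻¹ * a⁻¹ * c) ∧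
        l.prod = b := by
  intro a b ha _
  obtain ⟨g, hg, hag⟩ := hfp a
  obtain ⟨k, hk, hbk⟩ := hfp b
  have hcomm := orderOf_commutatorElement_eq_zero_of_injective_coprodLift ha hg hag
  obtain ⟨c, hc⟩ := h.exists_conj_of_orderOf_eq <|
    hcomm.trans (orderOf_mul_eq_zero_of_injective_coprodLift hk hbk).symm
  obtain ⟨d, hd⟩ := h.exists_conj_of_orderOf_eq <| hcomm.trans (orderOf_inv k ▸ hk).symm
  refine ⟨[c⁻¹ * a * c, (g⁻¹ * c)⁻¹ * a⁻¹ * (g⁻¹ * c), d⁻¹ * a * d,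
    (g⁻¹ * d)⁻¹ * a⁻¹ * (g⁻¹ * d)], by simp, ?_, ?_⟩
  · simp only [List.forall_mem_cons, List.not_mem_nil, IsEmpty.forall_iff, implies_true, and_true]
    exact ⟨⟨c, .inl rfl⟩, ⟨g⁻¹ * c, .inr rfl⟩, ⟨d, .inl rfl⟩, ⟨g⁻¹ * d, .inr rfl⟩⟩
  · calc _ = (c⁻¹ * ⁅a, g⁆ * c) * (d⁻¹ * ⁅a, g⁆ * d) := by
          simp only [List.prod_cons, List.prod_nil, commutatorElement_def]
          group
      _ = b := by rw [hc, hd]; group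
end

section
/- If Γ is an inner ultrahomogeneous group, then Γ = Γ_∞ · Γ_{2^∞}, where Γ_∞ is the normal subgroup generated by elements of infinite order and Γ_{2^∞} is the normal subgroup generated by elements of 2-power order. In particular, if Γ is torsion then Γ = Γ_{2^∞}, and if Γ has no element of order 2 then Γ = Γ_∞. -/
/-!
Let `N = Γ_∞ ⊔ Γ_{2^∞}`. Every element of `Γ ⧸ N` has odd order: an element of order `2^a m` with
`m` odd has `g^m` of order `2^a`. In a group, if `c⁻¹ g c = g⁻¹` and `c` has odd order, then `c²`
centralises `g` and `c` is a power of `c²`, so `g = g⁻¹`; if `g` has odd order too, `g = 1`.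
Since inner ultrahomogeneity makes every element conjugate to its inverse, `Γ ⧸ N` is trivial.
-/

open scoped Pointwise


theorem InnerUltrahomogeneous.exists_inv_mul_mul_eq_inv {G : Type*} [Group G]
    (h : InnerUltrahomogeneous G) (g : G) : ∃ c : G, c⁻¹ * g * c = g⁻¹ := by
  have hFG : (Subgroup.zpowers g).FG := ⟨{g}, by simp [Subgroup.zpowers_eq_closure]⟩
  have : IsMulCommutative (Subgroup.zpowers g) := Subgroup.zpowers_isMulCommutative g
  obtain ⟨c, hc⟩ := h _ _ hFG hFG (open IsMulCommutative in MulEquiv.inv _)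
  exact ⟨c, hc ⟨g, Subgroup.mem_zpowers g⟩⟩

section OddOrder

variable {G : Type*} [Group G]

theorem exists_odd_orderOf_pow_eq_two_pow {g : G} (hg : orderOf g ≠ 0) :
    ∃ m, Odd m ∧ ∃ k, orderOf (g ^ m) = 2 ^ k :=
  ⟨ordCompl[2] (orderOf g), Nat.coprime_two_left.mp (Nat.coprime_ordCompl Nat.prime_two hg),
    (orderOf g).factorization 2, by
      rw [orderOf_pow_of_dvd (Nat.ordCompl_pos 2 hg).ne' (Nat.ordCompl_dvd _ 2),
        Nat.div_div_self (Nat.ordProj_dvd _ 2) hg]⟩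

theorem orderOf_pow_two_pow_eq_two {g : G} {k : ℕ} (hg : orderOf g = 2 ^ (k + 1)) :
    orderOf (g ^ 2 ^ k) = 2 := by
  rw [orderOf_pow_of_dvd (by positivity) (hg ▸ pow_dvd_pow 2 k.le_succ), hg, pow_succ,
    Nat.mul_div_cancel_left _ (by positivity)]

theorem commute_of_inv_mul_mul_eq_inv {g c : G} (hc : c⁻¹ * g * c = g⁻¹)
    (hodd : Odd (orderOf c)) : Commute g c := by
  have hsq : Commute g (c ^ 2) := by
    calc g * c ^ 2 = c * (c⁻¹ * g * c) * c := by
          simp only [sq, mul_assoc, mul_inv_cancel_left]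
      _ = c * g⁻¹ * c := by rw [hc]
      _ = c ^ 2 * (c⁻¹ * g * c)⁻¹ := by group
      _ = c ^ 2 * g := by rw [hc, inv_inv]
  obtain ⟨m, hm⟩ := exists_pow_eq_self_of_coprime (Nat.coprime_two_left.mpr hodd)
  simpa only [hm] using hsq.pow_right m

theorem eq_one_of_inv_mul_mul_eq_inv {g c : G} (hc : c⁻¹ * g * c = g⁻¹)
    (hoddg : Odd (orderOf g)) (hoddc : Odd (orderOf c)) : g = 1 := by
  have hfix : c⁻¹ * g * c = g := (commute_of_inv_mul_mul_eq_inv hc hoddc).symm.inv_mul_cancel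
  have hg2 : g ^ 2 = 1 := by
    rw [sq, mul_eq_one_iff_eq_inv, ← hc, hfix]
  obtain ⟨m, hm⟩ := exists_pow_eq_self_of_coprime (Nat.coprime_two_left.mpr hoddg)
  rw [← hm, hg2, one_pow]

variable {N : Subgroup G} [N.Normal]

theorem odd_orderOf_mk (hinf : ∀ g : G, orderOf g = 0 → g ∈ N)
    (htwo : ∀ (g : G) (k : ℕ), orderOf g = 2 ^ k → g ∈ N) (g : G) :
    Odd (orderOf (g : G ⧸ N)) := by
  by_cases hg : orderOf g = 0
  · rw [(QuotientGroup.eq_one_iff g).mpr (hinf g hg), orderOf_one]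
    exact odd_one
  obtain ⟨m, hm, k, hk⟩ := exists_odd_orderOf_pow_eq_two_pow hg
  refine hm.of_dvd_nat (orderOf_dvd_of_pow_eq_one ?_)
  rw [← QuotientGroup.mk_pow, QuotientGroup.eq_one_iff]
  exact htwo _ k hk

theorem eq_top_of_forall_inv_mul_mul_eq_inv (hconj : ∀ g : G, ∃ c : G, c⁻¹ * g * c = g⁻¹)
    (hinf : ∀ g : G, orderOf g = 0 → g ∈ N)
    (htwo : ∀ (g : G) (k : ℕ), orderOf g = 2 ^ k → g ∈ N) : N = ⊤ := by
  refine (Subgroup.eq_top_iff' N).mpr fun g => ?_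
  obtain ⟨c, hc⟩ := hconj g
  rw [← QuotientGroup.eq_one_iff]
  refine eq_one_of_inv_mul_mul_eq_inv (c := (c : G ⧸ N)) ?_ (odd_orderOf_mk hinf htwo g)
    (odd_orderOf_mk hinf htwo c)
  simpa using congrArg ((↑) : G → G ⧸ N) hc

end OddOrder

theorem group_eq_infinite_order_mul_two_power_order
    {Γ : Type*} [Group Γ] (h : InnerUltrahomogeneous Γ) :
    (∀ g : Γ, ∃ x ∈ Subgroup.normalClosure {y : Γ | orderOf y = 0},
      ∃ z ∈ Subgroup.normalClosure {y : Γ | ∃ k : ℕ, orderOf y = 2 ^ k}, g = x * z) ∧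
    ((∀ g : Γ, IsOfFinOrder g) →
      Subgroup.normalClosure {y : Γ | ∃ k : ℕ, orderOf y = 2 ^ k} = ⊤) ∧
    ((∀ g : Γ, orderOf g ≠ 2) →
      Subgroup.normalClosure {y : Γ | orderOf y = 0} = ⊤) := by
  set Ninf := Subgroup.normalClosure {y : Γ | orderOf y = 0}
  set N2 := Subgroup.normalClosure {y : Γ | ∃ k : ℕ, orderOf y = 2 ^ k}
  have htop : Ninf ⊔ N2 = ⊤ :=
    eq_top_of_forall_inv_mul_mul_eq_inv h.exists_inv_mul_mul_eq_inv
      (fun _ hg => Subgroup.mem_sup_left (Subgroup.subset_normalClosure hg))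
      (fun _ k hk => Subgroup.mem_sup_right (Subgroup.subset_normalClosure ⟨k, hk⟩))
  refine ⟨fun g => ?_, fun htor => ?_, fun hno2 => ?_⟩
  · obtain ⟨x, hx, z, hz, hxz⟩ : g ∈ (Ninf : Set Γ) * N2 := by
      rw [← Subgroup.mul_normal, htop]
      trivial
    exact ⟨x, hx, z, hz, hxz.symm⟩
  · have hbot : Ninf = ⊥ := Subgroup.normalClosure_eq_bot_iff.mpr fun y hy =>
      absurd hy (htor y).orderOf_pos.ne'
    rwa [hbot, bot_sup_eq] at htop
  · have hbot : N2 = ⊥ := by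
      refine Subgroup.normalClosure_eq_bot_iff.mpr ?_
      rintro y ⟨_ | k, hk⟩
      · exact orderOf_eq_one_iff.mp hk
      · exact absurd (orderOf_pow_two_pow_eq_two hk) (hno2 _)
    rwa [hbot, sup_bot_eq] at htop
end

section
/- If Γ is an inner ultrahomogeneous group, then Γ is not isomorphic to a direct product of two nontrivial groups. -/
def ConjugacyByOrder (G : Type*) [Group G] : Prop :=
  ∀ x y : G, orderOf x = orderOf y → IsConj x y

open Subgroup QuotientGroup

section

variable {G : Type*} [Group G]

theorem exists_zpowers_mulEquiv_of_orderOf_eq {x y : G} (h : orderOf x = orderOf y) :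
    ∃ e : zpowers x ≃* zpowers y, e ⟨x, mem_zpowers x⟩ = ⟨y, mem_zpowers y⟩ := by
  have hker : (zpowersHom G x).ker = (zpowersHom G y).ker := by
    rw [zpowersHom_ker_eq, zpowersHom_ker_eq, h]
  let ex : _ ⧸ _ ≃* zpowers x := quotientKerEquivRange (zpowersHom G x)
  let ey : _ ⧸ _ ≃* zpowers y := quotientKerEquivRange (zpowersHom G y)
  have hx : ex (mk (Multiplicative.ofAdd 1)) = ⟨x, mem_zpowers x⟩ := Subtype.ext (zpow_one x)
  have hy : ey (mk (Multiplicative.ofAdd 1)) = ⟨y, mem_zpowers y⟩ := Subtype.ext (zpow_one y)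
  refine ⟨ex.symm.trans ((quotientMulEquivOfEq hker).trans ey), ?_⟩
  rw [MulEquiv.trans_apply, MulEquiv.trans_apply, ← hx, ← hy, MulEquiv.symm_apply_apply]
  rfl

theorem InnerUltrahomogeneous.conjugacyByOrder (h : InnerUltrahomogeneous G) :
    ConjugacyByOrder G := by
  intro x y hxy
  obtain ⟨e, he⟩ := exists_zpowers_mulEquiv_of_orderOf_eq hxy
  have hfg (w : G) : (zpowers w).FG := ⟨{w}, by simp [zpowers_eq_closure]⟩
  obtain ⟨g, hg⟩ := h _ _ (hfg x) (hfg y) e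
  refine isConj_iff.mpr ⟨g⁻¹, ?_⟩
  rw [inv_inv, hg ⟨x, mem_zpowers x⟩, he]

theorem ConjugacyByOrder.of_mulEquiv {H : Type*} [Group H] (h : ConjugacyByOrder G)
    (φ : G ≃* H) : ConjugacyByOrder H := by
  intro x y hxy
  have hconj := h (φ.symm x) (φ.symm y) (by rwa [MulEquiv.orderOf_eq, MulEquiv.orderOf_eq])
  simpa using MonoidHom.map_isConj (φ : G →* H) hconj

theorem even_orderOf_of_semiconjBy_inv {c z : G} (hc : SemiconjBy c z z⁻¹) (hz : z⁻¹ ≠ z) :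
    Even (orderOf c) := by
  rw [← Nat.not_odd_iff_even]
  rintro ⟨k, hk⟩
  -- `c²` centralizes `z`, and for odd order `c⁻¹` is a power of `c²`.
  have hcc : Commute (c * c) z := (inv_inv z ▸ hc.inv_right).mul_left hc
  have hinv : c⁻¹ = (c * c) ^ k := by
    rw [← pow_two, ← pow_mul, eq_comm, ← mul_eq_one_iff_eq_inv, ← pow_succ, ← hk,
      pow_orderOf_eq_one]
  have hcz : Commute c z := by simpa [← hinv] using (hcc.pow_left k).inv_left
  exact hz (mul_right_cancel (hc.symm.trans hcz))

theorem exists_orderOf_eq_two_of_forall_isConj_inv [Nontrivial G]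
    (hfin : ∀ g : G, IsOfFinOrder g) (hinv : ∀ g : G, IsConj g g⁻¹) :
    ∃ t : G, orderOf t = 2 := by
  obtain ⟨z, hz⟩ := exists_ne (1 : G)
  by_cases hz2 : z⁻¹ = z
  · exact ⟨z, orderOf_eq_prime (by rw [pow_two, mul_eq_one_iff_inv_eq, hz2]) hz⟩
  · obtain ⟨c, hc⟩ := hinv z
    have heven := even_orderOf_of_semiconjBy_inv hc hz2
    exact ⟨c ^ (orderOf (c : G) / 2),
      orderOf_pow_orderOf_div (hfin c).orderOf_pos.ne' (even_iff_two_dvd.mp heven)⟩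

end

namespace ConjugacyByOrder

variable {G₁ G₂ : Type*} [Group G₁] [Group G₂]

theorem eq_one_of_orderOf_dvd (h : ConjugacyByOrder (G₁ × G₂)) {a : G₁} {b : G₂}
    (hba : orderOf b ∣ orderOf a) : b = 1 := by
  have hord : orderOf (a, (1 : G₂)) = orderOf (a, b) := by
    rw [Prod.orderOf_mk, Prod.orderOf_mk, orderOf_one, Nat.lcm_one_right,
      Nat.lcm_eq_left_iff_dvd.mpr hba]
  exact isConj_one_right.mp (MonoidHom.map_isConj (MonoidHom.snd G₁ G₂) (h _ _ hord))

theorem isOfFinOrder_fst [Nontrivial G₂] (h : ConjugacyByOrder (G₁ × G₂)) (a : G₁) :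
    IsOfFinOrder a := by
  obtain ⟨b, hb⟩ := exists_ne (1 : G₂)
  by_contra ha
  exact hb (h.eq_one_of_orderOf_dvd (by rw [orderOf_eq_zero ha]; exact dvd_zero _))

theorem isConj_inv_fst (h : ConjugacyByOrder (G₁ × G₂)) (a : G₁) : IsConj a a⁻¹ :=
  MonoidHom.map_isConj (MonoidHom.fst G₁ G₂) (h (a, 1) (a, 1)⁻¹ (orderOf_inv _).symm)

end ConjugacyByOrder

theorem not_direct_product_of_innerUltrahomogeneous
    {Γ : Type*} [Group Γ] (h : InnerUltrahomogeneous Γ)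
    (G₁ G₂ : Type*) [Group G₁] [Group G₂]
    (h₁ : Nontrivial G₁) (h₂ : Nontrivial G₂) :
    IsEmpty (Γ ≃* G₁ × G₂) := by
  refine ⟨fun φ => ?_⟩
  have h₁₂ : ConjugacyByOrder (G₁ × G₂) := h.conjugacyByOrder.of_mulEquiv φ
  have h₂₁ : ConjugacyByOrder (G₂ × G₁) :=
    h.conjugacyByOrder.of_mulEquiv (φ.trans MulEquiv.prodComm)
  obtain ⟨t₁, ht₁⟩ :=
    exists_orderOf_eq_two_of_forall_isConj_inv h₁₂.isOfFinOrder_fst h₁₂.isConj_inv_fst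
  obtain ⟨t₂, ht₂⟩ :=
    exists_orderOf_eq_two_of_forall_isConj_inv h₂₁.isOfFinOrder_fst h₂₁.isConj_inv_fst
  have ht₂_eq_one : t₂ = 1 := h₁₂.eq_one_of_orderOf_dvd (a := t₁) (by rw [ht₁, ht₂])
  simp [ht₂_eq_one] at ht₂
end

section
/- If M is an ultrahomogeneous first-order structure whose age has disjoint amalgamation, then for every finitely generated substructure A ⊆ M and every element b ∈ M \ A, the orbit of b under the pointwise stabilizer Aut(M/A) is infinite. -/
/-! If the orbit of `b` under `Aut(M/A)` were finite, it would lie in a finitely generated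
`B ⊇ A`. Disjointly amalgamate two copies of `B` over `A` and embed the result in `M` by `f`
and `g`. By ultrahomogeneity both extend to automorphisms, and their quotient `τ` fixes `A`, so
`τ b` lies in the orbit, hence in `B`, and `f b = g (τ b)`: disjointness forces `b ∈ A`. -/

open FirstOrder CategoryTheory

/-- A class `K` of (bundled) `L`-structures has disjoint amalgamation if any
two members with a common embedded member `C` amalgamate over `C` so that the
images intersect exactly in the image of `C`. -/
def DisjointAmalgamation (L : FirstOrder.Language.{u, v})
    (K : Set (Bundled.{w} L.Structure)) : Prop :=
  ∀ A B C : Bundled.{w} L.Structure, A ∈ K → B ∈ K → C ∈ K →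
    ∀ (f : C ↪[L] A) (g : C ↪[L] B),
      ∃ D ∈ K, ∃ (fa : A ↪[L] D) (fb : B ↪[L] D),
        fa.comp f = fb.comp g ∧
        Set.range fa ∩ Set.range fb = Set.range (fa.comp f)

namespace FirstOrder.Language

variable {L : Language.{u, v}} {M : Type w} [L.Structure M] {A B : L.Substructure M}

theorem Substructure.FG.mem_age {S : L.Substructure M} (hS : S.FG) :
    Bundled.of (c := L.Structure) S ∈ L.age M :=
  ⟨S.fg_iff_structure_fg.1 hS, ⟨S.subtype⟩⟩

theorem _root_.DisjointAmalgamation.exists_embeddings_eq_imp_mem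
    (hDA : DisjointAmalgamation L (L.age M)) (hAB : A ≤ B) (hA : A.FG) (hB : B.FG) :
    ∃ f g : B ↪[L] M, (∀ a (ha : a ∈ A), f ⟨a, hAB ha⟩ = g ⟨a, hAB ha⟩) ∧
      ∀ x y : B, f x = g y → (x : M) ∈ A := by
  obtain ⟨D, ⟨-, ⟨h⟩⟩, fa, fb, hcomm, hdisj⟩ := hDA (.of B) (.of B) (.of A)
    hB.mem_age hB.mem_age hA.mem_age (Substructure.inclusion hAB) (Substructure.inclusion hAB)
  refine ⟨h.comp fa, h.comp fb, fun a ha => congrArg h (Embedding.ext_iff.1 hcomm ⟨a, ha⟩),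
    fun x y hxy => ?_⟩
  have hx : fa x ∈ Set.range fa ∩ Set.range fb := ⟨⟨x, rfl⟩, ⟨y, (h.injective hxy).symm⟩⟩
  rw [hdisj] at hx
  obtain ⟨c, hc⟩ := hx
  rw [← fa.injective hc]
  exact c.2

theorem IsUltrahomogeneous.exists_equiv_fixing_apply_eq_imp_eq (hUH : L.IsUltrahomogeneous M)
    (hAB : A ≤ B) (hB : B.FG) (f g : B ↪[L] M)
    (hfg : ∀ a (ha : a ∈ A), f ⟨a, hAB ha⟩ = g ⟨a, hAB ha⟩) :
    ∃ τ : M ≃[L] M, (∀ a ∈ A, τ a = a) ∧ ∀ x y : B, τ x = y → f x = g y := by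
  obtain ⟨σf, hσf⟩ := hUH B hB f
  obtain ⟨σg, hσg⟩ := hUH B hB g
  have hf (x : B) : f x = σf x := by rw [hσf]; rfl
  have hg (x : B) : g x = σg x := by rw [hσg]; rfl
  refine ⟨σg.symm.comp σf, fun a ha => ?_, fun x y hxy => ?_⟩
  · rw [Equiv.comp_apply, ← hf ⟨a, hAB ha⟩, hfg a ha, hg, Equiv.symm_apply_apply]
  · rw [hf, hg, ← hxy, Equiv.comp_apply, Equiv.apply_symm_apply]

end FirstOrder.Language

theorem infinite_orbit_of_disjoint_amalgamation
    (L : FirstOrder.Language.{u, v}) (M : Type w) [L.Structure M]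
    (hUH : L.IsUltrahomogeneous M)
    (hDA : DisjointAmalgamation L (L.age M))
    (A : L.Substructure M) (hA : A.FG) (b : M) (hb : b ∉ A) :
    Set.Infinite {x : M | ∃ σ : M ≃[L] M, (∀ a ∈ A, σ a = a) ∧ σ b = x} := by
  set orbit := {x : M | ∃ σ : M ≃[L] M, (∀ a ∈ A, σ a = a) ∧ σ b = x}
  intro hfin
  set B := A ⊔ Language.Substructure.closure L orbit
  have hAB : A ≤ B := le_sup_left
  have horbitB : orbit ⊆ B := fun _ hx =>
    (le_sup_right : Language.Substructure.closure L orbit ≤ B)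
      (Language.Substructure.subset_closure hx)
  have hbB : b ∈ B := horbitB ⟨.refl L M, fun _ _ => rfl, rfl⟩
  have hB : B.FG := hA.sup (Language.Substructure.fg_closure hfin)
  obtain ⟨f, g, hfg, hdisj⟩ := hDA.exists_embeddings_eq_imp_mem hAB hA hB
  obtain ⟨τ, hτA, hτ⟩ := hUH.exists_equiv_fixing_apply_eq_imp_eq hAB hB f g hfg
  have hτbB : τ b ∈ B := horbitB ⟨τ, hτA, rfl⟩
  exact hb (hdisj ⟨b, hbB⟩ ⟨τ b, hτbB⟩ (hτ _ _ rfl))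
end
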